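/- Let M be a totally unimodular matrix with columns indexed by E, Λ = ker(M) ∩ ℤ^E, and assume Tutte's consistent circuit decomposition: every λ ∈ Λ is a finite sum of circuits each contained in λ. Let λ, μ ∈ Λ be circuits (Eulerian flows supported on circuits of the column matroid) whose corresponding hyperplanes F_λ = {x : 2⟨x,λ⟩ = ‖λ‖²} and F_μ = {x : 2⟨x,μ⟩ = ‖μ‖²} both meet the Voronoi cell V_0 at a common point. Then λ and μ are consistent, i.e., λ_e·μ_e ≥ 0 for all e ∈ E. -/

import Mathlib

def Consistent {E : Type*} (x y : E → ℝ) : Prop := ∀ e, 0 ≤ x e * y e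

def Contained {E : Type*} (μ lam : E → ℝ) : Prop :=
  ∃ γ : E → ℝ, lam = μ + γ ∧ Consistent μ lam ∧ Consistent γ lam

/-- A circuit in Λ: a nonzero Eulerian kernel vector whose support is a minimal
linearly dependent set of columns of M. -/
def IsCircuit {V E : Type*} [Fintype E] (M : Matrix V E ℝ) (γ : E → ℝ) : Prop :=
  M.mulVec γ = 0 ∧ (∀ e, γ e = -1 ∨ γ e = 0 ∨ γ e = 1) ∧ γ ≠ 0 ∧
    ¬ LinearIndependent ℝ (fun e : {e : E // γ e ≠ 0} => fun v => M v e.1) ∧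
    ∀ s : Set E, s ⊂ {e : E | γ e ≠ 0} →
      LinearIndependent ℝ (fun e : s => fun v => M v e.1)

def latMem {V E : Type*} [Fintype E] (M : Matrix V E ℝ) (x : E → ℝ) : Prop :=
  M.mulVec x = 0 ∧ ∀ e, ∃ n : ℤ, x e = n


/-!
Total unimodularity and Cramer's rule make every kernel vector with minimal support a multiple
of a `{0, ±1}` circuit, so every nonzero `ν ∈ Λ` contains a circuit `δ` conforming to it, and
`ν - δ ∈ Λ` is strictly shorter in `ℓ¹`. For each such `δ`, `x ∈ V_0` gives
`2⟨x, δ⟩ ≤ ‖δ‖² = ‖δ‖₁`, and peeling off circuits one at a time yields `2⟨x, ν⟩ ≤ ‖ν‖₁`.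
For `ν = λ + μ` the two hyperplane equations turn this into `‖λ‖₁ + ‖μ‖₁ ≤ ‖λ + μ‖₁`, which forces
`λ_e` and `μ_e` to have the same sign for every `e`.
-/

open Matrix

namespace Matrix

theorem exists_det_submatrix_ne_zero_of_linearIndependent_col {K V ι : Type*} [Field K]
    [Fintype V] [Fintype ι] [DecidableEq ι] (A : Matrix V ι K) (h : LinearIndependent K A.col) :
    ∃ f : ι → V, (A.submatrix f id).det ≠ 0 := by
  have hrank : A.rank = Fintype.card ι := by
    rw [← rank_transpose]
    exact LinearIndependent.rank_matrix (M := Aᵀ) h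
  have hspan : Submodule.span K (Set.range A.row) = ⊤ := by
    apply Submodule.eq_top_of_finrank_eq
    rw [← rank_eq_finrank_span_row, hrank, Module.finrank_fintype_fun_eq_card]
  obtain ⟨κ, a, -, hspan', hli⟩ := exists_linearIndependent' K A.row
  let b := Module.Basis.mk hli (by rw [hspan', hspan])
  let e := b.indexEquiv (Pi.basisFun K ι)
  refine ⟨a ∘ e.symm, fun hdet => ?_⟩
  have hrows : LinearIndependent K (A.submatrix (a ∘ e.symm) id).row :=
    hli.comp e.symm e.symm.injective
  exact (isUnit_iff_isUnit_det _ |>.mp (linearIndependent_rows_iff_isUnit.mp hrows)).ne_zero hdet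

theorem det_mul_eq_det_updateCol {n α : Type*} [DecidableEq n] [Fintype n] [CommRing α]
    {A : Matrix n n α} {u b : n → α} (h : A *ᵥ u = b) (j : n) :
    A.det * u j = (A.updateCol j b).det := by
  rw [← cramer_apply, ← h, cramer_eq_adjugate_mulVec, mulVec_mulVec, adjugate_mul, smul_mulVec,
    one_mulVec, Pi.smul_apply, smul_eq_mul]

theorem IsTotallyUnimodular.abs_det_submatrix {V E : Type*} {M : Matrix V E ℝ}
    (hM : M.IsTotallyUnimodular) {k : ℕ} (f : Fin k → V) (g : Fin k → E) :
    |(M.submatrix f g).det| = 0 ∨ |(M.submatrix f g).det| = 1 := by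
  obtain ⟨σ, hσ⟩ := (isTotallyUnimodular_iff M).mp hM k f g
  rcases σ with _ | _ | _ <;> simp [← hσ]

section Columns

variable {R V E : Type*} [CommRing R] [Fintype E]

theorem mulVec_apply_eq_sum_comp_of_support_subset (M : Matrix V E R) {ι : Type*} [Fintype ι]
    {g : ι → E} (hg : Function.Injective g) {z : E → R} (hz : ∀ e, z e ≠ 0 → e ∈ Set.range g)
    (v : V) : (M *ᵥ z) v = ∑ i, z (g i) * M v (g i) :=
  (Fintype.sum_of_injective g hg (fun i => z (g i) * M v (g i)) (fun e => M v e * z e)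
    (fun e he => by simp [not_imp_comm.mp (hz e) he]) (fun i => mul_comm _ _)).symm

theorem linearIndependent_cols_iff_forall_mulVec_eq_zero (M : Matrix V E R) (s : Set E) :
    LinearIndependent R (fun e : s => fun v => M v e.1) ↔
      ∀ z : E → R, M *ᵥ z = 0 → (∀ e, z e ≠ 0 → e ∈ s) → z = 0 := by
  classical
  have hsum : ∀ z : E → R, (∀ e, z e ≠ 0 → e ∈ s) →
      M *ᵥ z = ∑ e : s, z e • fun v => M v e.1 := fun z hz => by
    ext v
    rw [mulVec_apply_eq_sum_comp_of_support_subset M Subtype.val_injective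
      (by simpa using hz) v]
    simp only [Finset.sum_apply, Pi.smul_apply, smul_eq_mul]
  rw [Fintype.linearIndependent_iff]
  constructor
  · intro h z hz hsupp
    ext e
    by_cases he : e ∈ s
    · exact h (fun e => z e) (by rw [← hsum z hsupp, hz]) ⟨e, he⟩
    · by_contra hne
      exact he (hsupp e hne)
  · intro h g hg i
    let z : E → R := fun e => if he : e ∈ s then g ⟨e, he⟩ else 0
    have hsupp : ∀ e, z e ≠ 0 → e ∈ s := fun e hne => by
      by_contra he
      simp [z, he] at hne
    have := congrFun (h z (by rw [hsum z hsupp]; simpa [z] using hg) hsupp) i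
    simpa [z] using this

theorem det_submatrix_mul_eq_of_mulVec_eq_zero {ι : Type*} [Fintype ι] [DecidableEq ι]
    {M : Matrix V E R} {y : E → R} (hker : M *ᵥ y = 0) (f : ι → V)
    {g : ι → E} (hg : Function.Injective g) {e₀ : E} (he₀ : e₀ ∉ Set.range g)
    (hsupp : ∀ e, y e ≠ 0 → e ≠ e₀ → e ∈ Set.range g) (j : ι) :
    (M.submatrix f g).det * y (g j) = -y e₀ * (M.submatrix f (Function.update g j e₀)).det := by
  classical
  let y' := y - y e₀ • Pi.single e₀ 1
  have hy' (e : E) (he : e ≠ e₀) : y' e = y e := by simp [y', he]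
  have hg₀ (i : ι) : g i ≠ e₀ := fun h => he₀ ⟨i, h⟩
  have hsupp' (e : E) (he : y' e ≠ 0) : e ∈ Set.range g := by
    have hne : e ≠ e₀ := by rintro rfl; simp [y'] at he
    exact hsupp e (by rwa [← hy' e hne]) hne
  have hsystem : M.submatrix f g *ᵥ (y ∘ g) = -y e₀ • fun i => M (f i) e₀ := by
    ext i
    have hsum := mulVec_apply_eq_sum_comp_of_support_subset M hg hsupp' (f i)
    simp only [hy' _ (hg₀ _)] at hsum
    simp only [y', mulVec_sub, mulVec_smul, hker, mulVec_single_one] at hsum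
    simp only [mulVec, dotProduct, submatrix_apply, Function.comp_apply]
    simp_rw [mul_comm (M _ _), ← hsum]
    simp [col]
  rw [show y (g j) = (y ∘ g) j from rfl, det_mul_eq_det_updateCol hsystem j, det_updateCol_smul]
  congr 2
  ext i k
  by_cases hk : k = j <;> simp [hk]

end Columns

end Matrix

def Conforms {E : Type*} (y ν : E → ℝ) : Prop := ∀ e, y e ≠ 0 → 0 < y e * ν e

namespace Conforms

variable {E : Type*} {a b c : E → ℝ}

theorem ne_zero (h : Conforms a b) {e : E} (he : a e ≠ 0) : b e ≠ 0 := by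
  have := h e he
  rintro hb
  rw [hb, mul_zero] at this
  exact this.false

theorem trans (hab : Conforms a b) (hbc : Conforms b c) : Conforms a c := fun e he => by
  have h1 := hab e he
  have h2 := hbc e (hab.ne_zero he)
  have : 0 < a e * c e * b e ^ 2 := by nlinarith [mul_pos h1 h2]
  exact pos_of_mul_pos_left this (sq_nonneg _)

end Conforms

section Surgery

variable {E : Type*} [Fintype E] {y z : E → ℝ}

-- `c = 1 / max (z / y)` is the largest step for which no entry of `y - c • z` changes sign.
theorem exists_conforms_sub_smul_of_pos (hsub : ∀ e, y e = 0 → z e = 0)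
    (hpos : ∃ e, 0 < z e / y e) :
    ∃ c : ℝ, Conforms (y - c • z) y ∧ ∃ e, y e ≠ 0 ∧ (y - c • z) e = 0 := by
  obtain ⟨e₁, he₁⟩ := hpos
  obtain ⟨e₀, -, hmax⟩ := Finset.exists_max_image Finset.univ (fun e => z e / y e)
    ⟨e₁, Finset.mem_univ _⟩
  set s := z e₀ / y e₀
  have hs : 0 < s := he₁.trans_le (hmax e₁ (Finset.mem_univ _))
  have hy₀ : y e₀ ≠ 0 := fun h => by simp [s, h] at hs
  refine ⟨s⁻¹, fun e he => ?_, e₀, hy₀, ?_⟩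
  · have hye : y e ≠ 0 := fun h => he (by simp [h, hsub e h])
    have hnonneg : 0 ≤ (y - s⁻¹ • z) e * y e := by
      have : (y - s⁻¹ • z) e * y e = y e ^ 2 * (1 - s⁻¹ * (z e / y e)) := by
        simp only [Pi.sub_apply, Pi.smul_apply, smul_eq_mul]
        field_simp
      rw [this]
      refine mul_nonneg (sq_nonneg _) (sub_nonneg.mpr ?_)
      rw [inv_mul_le_iff₀ hs, mul_one]
      exact hmax e (Finset.mem_univ _)
    exact hnonneg.lt_of_ne (mul_ne_zero he hye).symm
  · have hz₀ : z e₀ ≠ 0 := fun h => by simp [s, h] at hs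
    simp only [Pi.sub_apply, Pi.smul_apply, smul_eq_mul, s, inv_div]
    field_simp
    ring

theorem exists_conforms_sub_smul (hsub : ∀ e, y e = 0 → z e = 0) (hz : z ≠ 0) :
    ∃ c : ℝ, Conforms (y - c • z) y ∧ ∃ e, y e ≠ 0 ∧ (y - c • z) e = 0 := by
  obtain ⟨e, he⟩ := Function.ne_iff.mp hz
  have hratio : z e / y e ≠ 0 := div_ne_zero he (mt (hsub e) he)
  rcases hratio.lt_or_gt with hneg | hpos
  · have hsub' : ∀ e, y e = 0 → (-z) e = 0 := fun e h => by simp [hsub e h]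
    obtain ⟨c, hc⟩ := exists_conforms_sub_smul_of_pos hsub' ⟨e, by simpa [neg_div] using hneg⟩
    exact ⟨-c, by simpa using hc⟩
  · exact exists_conforms_sub_smul_of_pos hsub ⟨e, hpos⟩

end Surgery

section Circuits

variable {V E : Type*} [Fintype V] [Fintype E] {M : Matrix V E ℝ}

theorem eq_zero_or_abs_eq_abs_of_linearIndependent_cols (hM : M.IsTotallyUnimodular)
    {y : E → ℝ} (hker : M *ᵥ y = 0) {e₀ : E}
    (hli : LinearIndependent ℝ (fun e : ({e | y e ≠ 0} \ {e₀} : Set E) => fun v => M v e.1))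
    (e : E) : y e = 0 ∨ |y e| = |y e₀| := by
  classical
  set s : Set E := {e | y e ≠ 0} \ {e₀}
  let g : Fin (Fintype.card s) → E := fun j => (Fintype.equivFin s).symm j
  have hg : Function.Injective g := Subtype.val_injective.comp (Fintype.equivFin s).symm.injective
  have hrange : Set.range g = s :=
    ((Fintype.equivFin s).symm.surjective.range_comp _).trans Subtype.range_coe
  obtain ⟨f, hdet⟩ := exists_det_submatrix_ne_zero_of_linearIndependent_col (M.submatrix id g)
    (hli.comp _ (Fintype.equivFin s).symm.injective)
  replace hdet : (M.submatrix f g).det ≠ 0 := hdet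
  have hA : |(M.submatrix f g).det| = 1 :=
    (hM.abs_det_submatrix f g).resolve_left (abs_ne_zero.mpr hdet)
  have habs (j) : y (g j) = 0 ∨ |y (g j)| = |y e₀| := by
    have := congrArg abs (det_submatrix_mul_eq_of_mulVec_eq_zero hker f hg
      (e₀ := e₀) (by simp [hrange, s]) (fun e h1 h2 => by simp [hrange, s, h1, h2]) j)
    rw [abs_mul, abs_mul, abs_neg, hA, one_mul] at this
    rcases hM.abs_det_submatrix f (Function.update g j e₀) with h | h <;> simp_all
  by_cases he : e ∈ s
  · obtain ⟨j, rfl⟩ : e ∈ Set.range g := by rwa [hrange]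
    exact habs j
  · by_cases h : e = e₀
    · exact Or.inr (by rw [h])
    · left
      simpa [s, h] using he

theorem exists_isCircuit_conforms_of_minimal (hM : M.IsTotallyUnimodular)
    {y : E → ℝ} (hker : M *ᵥ y = 0) (hy : y ≠ 0)
    (hmin : ∀ s : Set E, s ⊂ {e : E | y e ≠ 0} →
      LinearIndependent ℝ (fun e : s => fun v => M v e.1)) :
    ∃ δ, IsCircuit M δ ∧ Conforms δ y := by
  obtain ⟨e₀, hy₀⟩ : ∃ e, y e ≠ 0 := Function.ne_iff.mp hy
  have hr : 0 < |y e₀| := abs_pos.mpr hy₀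
  set δ := |y e₀|⁻¹ • y
  have hδsupp : {e | δ e ≠ 0} = {e | y e ≠ 0} := by
    ext e
    simp [δ, hr.ne']
  have hδker : M *ᵥ δ = 0 := by simp [δ, mulVec_smul, hker]
  have hδ₀ : δ ≠ 0 := fun h => by simpa [δ, hr.ne', hy₀] using congrFun h e₀
  refine ⟨δ, ⟨hδker, fun e => ?_, hδ₀, ?_, hδsupp ▸ hmin⟩, fun e he => ?_⟩
  · have hli := hmin _ (Set.sdiff_singleton_ssubset.mpr hy₀)
    rcases eq_zero_or_abs_eq_abs_of_linearIndependent_cols hM hker hli e with h | h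
    · simp [δ, h]
    · have : |δ e| = 1 := by simp [δ, abs_mul, h, hr.ne']
      rcases abs_eq (zero_le_one' ℝ) |>.mp this with h' | h' <;> simp [h']
  · exact fun hli => hδ₀ ((linearIndependent_cols_iff_forall_mulVec_eq_zero M {e | δ e ≠ 0}).mp
      hli δ hδker fun e he => he)
  · have hye : y e ≠ 0 := by simpa [δ, hr.ne'] using he
    simpa [δ, ← mul_assoc, hye] using mul_pos (inv_pos.mpr hr) (mul_self_pos.mpr hye)

open Finset in
theorem exists_isCircuit_conforms (hM : M.IsTotallyUnimodular)
    {y : E → ℝ} (hker : M *ᵥ y = 0) (hy : y ≠ 0) : ∃ δ, IsCircuit M δ ∧ Conforms δ y := by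
  classical
  induction hn : #{e | y e ≠ 0} using Nat.strong_induction_on generalizing y with
  | _ n ih =>
  by_cases hmin : ∀ s : Set E, s ⊂ {e : E | y e ≠ 0} →
      LinearIndependent ℝ (fun e : s => fun v => M v e.1)
  · exact exists_isCircuit_conforms_of_minimal hM hker hy hmin
  push Not at hmin
  obtain ⟨s, hs, hdep⟩ := hmin
  obtain ⟨z, hzker, hzsupp, hz⟩ : ∃ z, M *ᵥ z = 0 ∧ (∀ e, z e ≠ 0 → e ∈ s) ∧ z ≠ 0 := by
    simpa [linearIndependent_cols_iff_forall_mulVec_eq_zero] using hdep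
  obtain ⟨c, hconf, e₁, hy₁, hc₁⟩ :=
    exists_conforms_sub_smul (fun e he => by_contra fun hze => hs.1 (hzsupp e hze) he) hz
  obtain ⟨e₂, hy₂, hs₂⟩ := Set.exists_of_ssubset hs
  have hy'ker : M *ᵥ (y - c • z) = 0 := by simp [mulVec_sub, mulVec_smul, hker, hzker]
  have hy'ne : y - c • z ≠ 0 := fun h => hy₂ (by
    simpa [not_imp_comm.mp (hzsupp e₂) hs₂] using congrFun h e₂)
  have hcard : #{e | (y - c • z) e ≠ 0} < n := hn ▸ card_lt_card
    ((ssubset_iff_of_subset fun e he => by simpa using hconf.ne_zero (by simpa using he)).mpr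
      ⟨e₁, by simpa using hy₁, by simpa using hc₁⟩)
  obtain ⟨δ, hδ, hδconf⟩ := ih _ hcard hy'ker hy'ne rfl
  exact ⟨δ, hδ, hδconf.trans hconf⟩

end Circuits

section Lattice

variable {V E : Type*} [Fintype E] {M : Matrix V E ℝ}

theorem latMem.add {a b : E → ℝ} (ha : latMem M a) (hb : latMem M b) : latMem M (a + b) :=
  ⟨by simp [mulVec_add, ha.1, hb.1], fun e => by
    obtain ⟨m, hm⟩ := ha.2 e
    obtain ⟨n, hn⟩ := hb.2 e
    exact ⟨m + n, by simp [hm, hn]⟩⟩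

theorem latMem.sub {a b : E → ℝ} (ha : latMem M a) (hb : latMem M b) : latMem M (a - b) :=
  ⟨by simp [mulVec_sub, ha.1, hb.1], fun e => by
    obtain ⟨m, hm⟩ := ha.2 e
    obtain ⟨n, hn⟩ := hb.2 e
    exact ⟨m - n, by simp [hm, hn]⟩⟩

theorem IsCircuit.latMem {δ : E → ℝ} (h : IsCircuit M δ) : latMem M δ :=
  ⟨h.1, fun e => by
    rcases h.2.1 e with h | h | h
    exacts [⟨-1, by simp [h]⟩, ⟨0, by simp [h]⟩, ⟨1, by simp [h]⟩]⟩

theorem IsCircuit.sum_sq_eq_sum_abs {δ : E → ℝ} (h : IsCircuit M δ) :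
    ∑ e, δ e ^ 2 = ∑ e, |δ e| :=
  Finset.sum_congr rfl fun e _ => by rcases h.2.1 e with h | h | h <;> simp [h]

end Lattice

theorem abs_sub_eq_abs_sub_abs_of_conforms {δ ν : ℝ} (hδ : δ = -1 ∨ δ = 0 ∨ δ = 1)
    (hconf : δ ≠ 0 → 0 < δ * ν) (hν : ∃ n : ℤ, ν = n) : |ν - δ| = |ν| - |δ| := by
  obtain ⟨n, rfl⟩ := hν
  rcases hδ with rfl | rfl | rfl
  · have : n < 0 := by exact_mod_cast neg_pos.mp (by simpa using hconf (by norm_num))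
    have : (n : ℝ) ≤ -1 := by exact_mod_cast Int.le_sub_one_of_lt this
    rw [abs_of_nonpos (by linarith), abs_of_nonpos (by linarith)]
    norm_num
    ring
  · simp
  · have : 0 < n := by exact_mod_cast (by simpa using hconf (by norm_num))
    have : (1 : ℝ) ≤ n := by exact_mod_cast this
    rw [abs_of_nonneg (by linarith), abs_of_nonneg (by linarith)]
    norm_num

theorem consistent_of_sum_abs_add_le_sum_abs_add {E : Type*} [Fintype E] {a b : E → ℝ}
    (h : ∑ e, |a e| + ∑ e, |b e| ≤ ∑ e, |a e + b e|) : Consistent a b := by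
  have hgap (e : E) : 0 ≤ |a e| + |b e| - |a e + b e| := sub_nonneg.mpr (abs_add_le _ _)
  have hsum : ∑ e, (|a e| + |b e| - |a e + b e|) = 0 := by
    refine le_antisymm ?_ (Finset.sum_nonneg fun e _ => hgap e)
    rw [Finset.sum_sub_distrib, Finset.sum_add_distrib]
    linarith
  intro e
  have he := (Finset.sum_eq_zero_iff_of_nonneg fun e _ => hgap e).mp hsum e (Finset.mem_univ e)
  rcases (abs_add_eq_add_abs_iff (a e) (b e)).mp (by linarith) with ⟨ha, hb⟩ | ⟨ha, hb⟩
  · exact mul_nonneg ha hb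
  · exact mul_nonneg_of_nonpos_of_nonpos ha hb

section Voronoi

variable {V E : Type*} [Fintype E] {M : Matrix V E ℝ} {x : E → ℝ}

theorem two_mul_sum_mul_le_sum_sq
    (hxV0 : ∀ ν : E → ℝ, latMem M ν → ∑ e, (x e) ^ 2 ≤ ∑ e, (x e - ν e) ^ 2)
    {ν : E → ℝ} (hν : latMem M ν) : 2 * ∑ e, x e * ν e ≤ ∑ e, ν e ^ 2 := by
  have hexpand : ∑ e, (x e - ν e) ^ 2 = ∑ e, x e ^ 2 - 2 * ∑ e, x e * ν e + ∑ e, ν e ^ 2 := by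
    simp only [sub_sq, Finset.sum_add_distrib, Finset.sum_sub_distrib, Finset.mul_sum, mul_assoc]
  linarith [hxV0 ν hν]

theorem two_mul_sum_mul_le_sum_abs [Fintype V] (hM : M.IsTotallyUnimodular)
    (hxV0 : ∀ ν : E → ℝ, latMem M ν → ∑ e, (x e) ^ 2 ≤ ∑ e, (x e - ν e) ^ 2)
    {ν : E → ℝ} (hν : latMem M ν) : 2 * ∑ e, x e * ν e ≤ ∑ e, |ν e| := by
  obtain ⟨N, hN⟩ := exists_nat_ge (∑ e, |ν e|)
  induction N generalizing ν with
  | zero =>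
    have hν0 : ν = 0 := funext fun e => abs_eq_zero.mp <|
      (Finset.sum_eq_zero_iff_of_nonneg fun e _ => abs_nonneg (ν e)).mp
        (le_antisymm (by simpa using hN) (Finset.sum_nonneg fun e _ => abs_nonneg _)) e
        (Finset.mem_univ e)
    simp [hν0]
  | succ N ih =>
    by_cases hν0 : ν = 0
    · simp [hν0]
    obtain ⟨δ, hδ, hconf⟩ := exists_isCircuit_conforms hM hν.1 hν0
    have habs : ∑ e, |(ν - δ) e| = ∑ e, |ν e| - ∑ e, |δ e| := by
      rw [← Finset.sum_sub_distrib]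
      exact Finset.sum_congr rfl fun e _ =>
        abs_sub_eq_abs_sub_abs_of_conforms (hδ.2.1 e) (hconf e) (hν.2 e)
    have hδ₁ : 1 ≤ ∑ e, |δ e| := by
      obtain ⟨e, he⟩ : ∃ e, δ e ≠ 0 := Function.ne_iff.mp hδ.2.2.1
      calc (1 : ℝ) = |δ e| := by rcases hδ.2.1 e with h | h | h <;> simp_all
        _ ≤ ∑ e, |δ e| := Finset.single_le_sum (fun e _ => abs_nonneg (δ e)) (Finset.mem_univ e)
    have hδx : 2 * ∑ e, x e * δ e ≤ ∑ e, |δ e| := by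
      simpa [hδ.sum_sq_eq_sum_abs] using two_mul_sum_mul_le_sum_sq hxV0 hδ.latMem
    have hrest := ih (hν.sub hδ.latMem) (by push_cast at hN; linarith)
    have hsplit : ∑ e, x e * ν e = ∑ e, x e * δ e + ∑ e, x e * (ν - δ) e := by
      rw [← Finset.sum_add_distrib]
      exact Finset.sum_congr rfl fun e _ => by simp only [Pi.sub_apply]; ring
    linarith

end Voronoi

theorem stmt_10_general {V E : Type*} [Fintype V] [Fintype E]
    (M : Matrix V E ℝ)
    (hTU : ∀ (k : ℕ) (f : Fin k → V) (g : Fin k → E),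
      (M.submatrix f g).det = 1 ∨ (M.submatrix f g).det = 0 ∨ (M.submatrix f g).det = -1)
    (lam μ : E → ℝ)
    (hclam : IsCircuit M lam) (hcμ : IsCircuit M μ)
    (x : E → ℝ)
    (hxV0 : ∀ ν : E → ℝ, latMem M ν → ∑ e, (x e) ^ 2 ≤ ∑ e, (x e - ν e) ^ 2)
    (hxFlam : 2 * ∑ e, x e * lam e = ∑ e, (lam e) ^ 2)
    (hxFμ : 2 * ∑ e, x e * μ e = ∑ e, (μ e) ^ 2) :
    Consistent lam μ := by
  have hM : M.IsTotallyUnimodular := (isTotallyUnimodular_iff M).mpr fun k f g => by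
    rcases hTU k f g with h | h | h <;> rw [h]
    exacts [⟨1, rfl⟩, ⟨0, rfl⟩, ⟨-1, rfl⟩]
  apply consistent_of_sum_abs_add_le_sum_abs_add
  have hsum := two_mul_sum_mul_le_sum_abs hM hxV0 (hclam.latMem.add hcμ.latMem)
  simp only [Pi.add_apply, mul_add, Finset.sum_add_distrib] at hsum
  rw [← hclam.sum_sq_eq_sum_abs, ← hcμ.sum_sq_eq_sum_abs]
  linarith

/-- Assume every integer flow admits a consistent circuit
decomposition. If λ, μ ∈ Λ are circuits whose hyperplanes
F_λ = {x : 2⟨x,λ⟩ = ‖λ‖²} and F_μ both meet the Voronoi cell V_0 at a common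
point x, then λ and μ are consistent. -/
theorem stmt_10 {V E : Type*} [Fintype V] [Fintype E]
    (M : Matrix V E ℝ)
    (hTU : ∀ (k : ℕ) (f : Fin k → V) (g : Fin k → E),
      (M.submatrix f g).det = 1 ∨ (M.submatrix f g).det = 0 ∨ (M.submatrix f g).det = -1)
    (hTutte : ∀ lam : E → ℝ, latMem M lam → ∃ (n : ℕ) (γ : Fin n → (E → ℝ)),
      lam = ∑ i, γ i ∧ ∀ i, IsCircuit M (γ i) ∧ Contained (γ i) lam)
    (lam μ : E → ℝ) (hlam : latMem M lam) (hμ : latMem M μ)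
    (hclam : IsCircuit M lam) (hcμ : IsCircuit M μ)
    (x : E → ℝ) (hxker : M.mulVec x = 0)
    (hxV0 : ∀ ν : E → ℝ, latMem M ν → ∑ e, (x e) ^ 2 ≤ ∑ e, (x e - ν e) ^ 2)
    (hxFlam : 2 * ∑ e, x e * lam e = ∑ e, (lam e) ^ 2)
    (hxFμ : 2 * ∑ e, x e * μ e = ∑ e, (μ e) ^ 2) :
    Consistent lam μ :=
  stmt_10_general M hTU lam μ hclam hcμ x hxV0 hxFlam hxFμ
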